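/- arXiv:1101.0979 — 3 statements merged into one kernel-verified Lean document; each statement's English description precedes it below -/
import Mathlib

section
/- The B^r seminorm is a norm on the space of Dirac k-chains in ℝⁿ: if A is a nonzero Dirac k-chain then ‖A‖_{B^r} > 0, for every r ≥ 0. -/
noncomputable section

open Finsupp Filter

variable {E W : Type*} [NormedAddCommGroup E] [NormedSpace ℝ E]
  [NormedAddCommGroup W] [NormedSpace ℝ W]

/-- Translation of a Dirac chain through the vector `u`. -/
def transl (u : E) (A : E →₀ W) : E →₀ W := Finsupp.mapDomain (· + u) A

/-- The difference operator `Δ_u = T_u - I`. -/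
def del (u : E) (A : E →₀ W) : E →₀ W := transl u A - A

/-- Iterated difference chain along a list of vectors. -/
def diff : List E → (E →₀ W) → (E →₀ W)
  | [], A => A
  | u :: σ, A => del u (diff σ A)

/-- The product of the norms of the vectors in the list `σ`. -/
def lnorm (σ : List E) : ℝ := (σ.map norm).prod

/-- Costs of representations of `A` as sums of `j`-difference chains with `j ≤ r`. -/
def reps (r : ℕ) (A : E →₀ W) : Set ℝ :=
  {c | ∃ (m : ℕ) (σ : Fin m → List E) (p : Fin m → E) (α : Fin m → W),
      (∀ i, (σ i).length ≤ r) ∧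
      A = ∑ i, diff (σ i) (Finsupp.single (p i) (α i)) ∧
      c = ∑ i, lnorm (σ i) * ‖α i‖}

/-- The `B^r` norm of a Dirac chain. -/
def Bnorm (r : ℕ) (A : E →₀ W) : ℝ := sInf (reps r A)

/-- `M` is a `B^r`-bound for the cochain (differential form) `ω`. -/
def IsFormBound (r : ℕ) (ω : (E →₀ W) →ₗ[ℝ] ℝ) (M : ℝ) : Prop :=
  ∀ (σ : List E) (p : E) (α : W), σ.length ≤ r →
    |ω (diff σ (Finsupp.single p α))| ≤ M * lnorm σ * ‖α‖

/-- The `B^r` norm of a differential form. -/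
def formNorm (r : ℕ) (ω : (E →₀ W) →ₗ[ℝ] ℝ) : ℝ :=
  sInf {M | 0 ≤ M ∧ IsFormBound r ω M}

/-!
Pick `q` in the support of `A`, a smooth compactly supported `f` with `f q = 1` vanishing at
the other points of the support, and a functional `φ` with `φ (A q) = ‖A q‖`. The cochain
`(p; α) ↦ f p * φ α` sends the difference chain `Δ_σ (p; α)` to `(Δ_σ f) p * φ α`, and
iterating the mean value theorem bounds `|Δ_σ f|` by `‖σ‖` times a bound of the `|σ|`-th
derivative of `f`. Hence `‖A q‖` is at most a constant times `‖A‖_{B^r}`.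
-/

open scoped ContDiff fwdDiff Topology

section FwdDiff

variable {F : Type*} [NormedAddCommGroup F] [NormedSpace ℝ F]

def fwdDiffAlong (σ : List E) (f : E → F) : E → F := σ.foldl (fun g u => Δ_[u] g) f

theorem ContDiff.fwdDiff {n : WithTop ℕ∞} {f : E → F} (hf : ContDiff ℝ n f) (u : E) :
    ContDiff ℝ n (Δ_[u] f) :=
  (hf.comp (contDiff_id.add contDiff_const)).sub hf

theorem norm_iteratedFDeriv_fwdDiff_le {k : ℕ} {f : E → F} (hf : ContDiff ℝ (k + 1) f)
    {C : ℝ} (hC : ∀ x, ‖iteratedFDeriv ℝ (k + 1) f x‖ ≤ C) (u x : E) :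
    ‖iteratedFDeriv ℝ k (Δ_[u] f) x‖ ≤ C * ‖u‖ := by
  have hk : ContDiff ℝ k f := hf.of_le (by norm_cast; omega)
  have hdiff : Differentiable ℝ (iteratedFDeriv ℝ k f) :=
    hf.differentiable_iteratedFDeriv (by norm_cast; omega)
  have hshift : iteratedFDeriv ℝ k (Δ_[u] f) x =
      iteratedFDeriv ℝ k f (x + u) - iteratedFDeriv ℝ k f x := by
    have hku : ContDiff ℝ k fun y => f (y + u) := hk.comp (contDiff_id.add contDiff_const)
    rw [show Δ_[u] f = (fun y => f (y + u)) - f from rfl,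
      iteratedFDeriv_sub_apply hku.contDiffAt hk.contDiffAt, iteratedFDeriv_comp_add_right]
  rw [hshift]
  simpa using convex_univ.norm_image_sub_le_of_norm_fderiv_le (fun y _ => hdiff y)
    (fun y _ => norm_fderiv_iteratedFDeriv.trans_le (hC y)) (Set.mem_univ x) (Set.mem_univ (x + u))

theorem norm_fwdDiffAlong_le (σ : List E) {f : E → F} (hf : ContDiff ℝ σ.length f) {C : ℝ}
    (hC : ∀ x, ‖iteratedFDeriv ℝ σ.length f x‖ ≤ C) (p : E) :
    ‖fwdDiffAlong σ f p‖ ≤ lnorm σ * C := by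
  induction σ generalizing f C with
  | nil => simpa [fwdDiffAlong, lnorm] using hC p
  | cons u σ ih =>
    have hf' : ContDiff ℝ (σ.length + 1) f := by simpa using hf
    calc ‖fwdDiffAlong σ (Δ_[u] f) p‖
        ≤ lnorm σ * (C * ‖u‖) :=
          ih (hf'.fwdDiff u |>.of_le (by norm_cast; omega))
            (norm_iteratedFDeriv_fwdDiff_le hf' (by simpa using hC) u)
      _ = lnorm (u :: σ) * C := by simp only [lnorm, List.map_cons, List.prod_cons]; ring

theorem exists_bound_iteratedFDeriv_of_hasCompactSupport {r : ℕ} {f : E → F}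
    (hc : HasCompactSupport f) (hf : ContDiff ℝ r f) :
    ∃ C, ∀ j ≤ r, ∀ x, ‖iteratedFDeriv ℝ j f x‖ ≤ C := by
  have hbdd : BddAbove (⋃ j ∈ Set.Iic r, Set.range fun x => ‖iteratedFDeriv ℝ j f x‖) :=
    (Set.finite_Iic r).bddAbove_biUnion.2 fun j hj =>
      (hf.continuous_iteratedFDeriv (by exact_mod_cast hj)).norm.bddAbove_range_of_hasCompactSupport
        (hc.iteratedFDeriv j).norm
  obtain ⟨C, hC⟩ := hbdd
  exact ⟨C, fun j hj x => hC (Set.mem_biUnion hj (Set.mem_range_self x))⟩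

end FwdDiff

section Pairing

variable {X : Type*}

def formOf (f : X → ℝ) (φ : W →L[ℝ] ℝ) : (X →₀ W) →ₗ[ℝ] ℝ :=
  Finsupp.lsum ℝ fun x => f x • (φ : W →ₗ[ℝ] ℝ)

theorem formOf_apply (f : X → ℝ) (φ : W →L[ℝ] ℝ) (B : X →₀ W) :
    formOf f φ B = B.sum fun x w => f x * φ w := by
  simp [formOf, Finsupp.lsum_apply, Finsupp.sum]

theorem formOf_single (f : X → ℝ) (φ : W →L[ℝ] ℝ) (p : X) (α : W) :
    formOf f φ (Finsupp.single p α) = f p * φ α := by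
  simp [formOf]

omit [NormedSpace ℝ E] in
theorem formOf_del (f : E → ℝ) (φ : W →L[ℝ] ℝ) (u : E) (B : E →₀ W) :
    formOf f φ (del u B) = formOf (Δ_[u] f) φ B := by
  simp only [del, transl, map_sub, formOf_apply, fwdDiff, sub_mul, Finsupp.sum_sub,
    Finsupp.sum_mapDomain_index_inj (add_left_injective u)]

omit [NormedSpace ℝ E] in
theorem formOf_diff (σ : List E) (f : E → ℝ) (φ : W →L[ℝ] ℝ) (B : E →₀ W) :
    formOf f φ (diff σ B) = formOf (fwdDiffAlong σ f) φ B := by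
  induction σ generalizing f with
  | nil => rfl
  | cons u σ ih => exact (formOf_del f φ u _).trans (ih _)

theorem formOf_eq_of_eq_zero_off {f : X → ℝ} (φ : W →L[ℝ] ℝ) {A : X →₀ W} {q : X}
    (hf : ∀ x ∈ A.support, x ≠ q → f x = 0) : formOf f φ A = f q * φ (A q) := by
  rw [formOf_apply, Finsupp.sum, Finset.sum_eq_single q (fun x hx hxq => by simp [hf x hx hxq])]
  intro hq
  simp [Finsupp.notMem_support_iff.1 hq]

theorem isFormBound_formOf {r : ℕ} {f : E → ℝ} (hf : ContDiff ℝ r f) {C : ℝ}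
    (hC : ∀ j ≤ r, ∀ x, ‖iteratedFDeriv ℝ j f x‖ ≤ C) (φ : W →L[ℝ] ℝ) :
    IsFormBound r (formOf f φ) (C * ‖φ‖) := by
  intro σ p α hσ
  rw [formOf_diff, formOf_single, abs_mul]
  have hdiff : |fwdDiffAlong σ f p| ≤ lnorm σ * C :=
    norm_fwdDiffAlong_le σ (hf.of_le (by exact_mod_cast hσ)) (hC _ hσ) p
  calc |fwdDiffAlong σ f p| * |φ α| ≤ (lnorm σ * C) * (‖φ‖ * ‖α‖) :=
        mul_le_mul hdiff (φ.le_opNorm α) (abs_nonneg _)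
          (le_trans (abs_nonneg _) hdiff)
    _ = C * ‖φ‖ * lnorm σ * ‖α‖ := by ring

end Pairing

omit [NormedSpace ℝ E] [NormedSpace ℝ W] in
theorem reps_nonempty (r : ℕ) (A : E →₀ W) : (reps r A).Nonempty := by
  classical
  let e := A.support.equivFin.symm
  refine ⟨_, A.support.card, fun _ => [], fun i => e i, fun i => A (e i),
    fun _ => Nat.zero_le r, ?_, rfl⟩
  change A = ∑ i, Finsupp.single (e i : E) (A (e i))
  rw [Fintype.sum_equiv e _ (fun x : A.support => Finsupp.single (x : E) (A x)) fun _ => rfl]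
  exact ((Finset.sum_coe_sort A.support _).trans (Finsupp.sum_single A)).symm

omit [NormedSpace ℝ E] in
theorem abs_le_mul_Bnorm_of_isFormBound {r : ℕ} {T : (E →₀ W) →ₗ[ℝ] ℝ} {M : ℝ}
    (hT : IsFormBound r T M) (hM : 0 ≤ M) (A : E →₀ W) : |T A| ≤ M * Bnorm r A := by
  have hrep : ∀ c ∈ reps r A, |T A| ≤ M * c := by
    rintro c ⟨m, σ, p, α, hlen, rfl, rfl⟩
    rw [map_sum, Finset.mul_sum]
    refine (Finset.abs_sum_le_sum_abs _ _).trans (Finset.sum_le_sum fun i _ => ?_)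
    rw [← mul_assoc]
    exact hT _ _ _ (hlen i)
  rcases hM.eq_or_lt with rfl | hM
  · obtain ⟨c, hc⟩ := reps_nonempty r A
    simpa using hrep c hc
  · rw [← div_le_iff₀' hM]
    exact le_csInf (reps_nonempty r A) fun c hc => (div_le_iff₀' hM).2 (hrep c hc)

theorem exists_contDiff_hasCompactSupport_eq_one_eq_zero [FiniteDimensional ℝ E]
    (s : Finset E) (q : E) : ∃ f : E → ℝ, ContDiff ℝ ∞ f ∧ HasCompactSupport f ∧
      f q = 1 ∧ ∀ x ∈ s, x ≠ q → f x = 0 := by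
  classical
  have hnhds : ((s.erase q : Set E))ᶜ ∈ 𝓝 q :=
    (s.erase q).finite_toSet.isClosed.isOpen_compl.mem_nhds (by simp)
  obtain ⟨f, hsupp, hc, hf, -, hfq⟩ := exists_contDiff_tsupport_subset (n := ⊤) hnhds
  refine ⟨f, hf, hc, hfq, fun x hx hxq => image_eq_zero_of_notMem_tsupport fun hx' => ?_⟩
  exact hsupp hx' (by simp [hx, hxq])

/-- The `B^r` seminorm is a norm on Dirac `k`-chains in `ℝⁿ`:
if `A ≠ 0` then `‖A‖_{B^r} > 0`, for every `r ≥ 0`. -/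
theorem Bnorm_pos_of_ne_zero {n : ℕ} {W : Type*}
    [NormedAddCommGroup W] [NormedSpace ℝ W] (r : ℕ)
    (A : (EuclideanSpace ℝ (Fin n)) →₀ W) (hA : A ≠ 0) :
    0 < Bnorm r A := by
  obtain ⟨q, hq⟩ := Finsupp.support_nonempty_iff.2 hA
  have hAq : 0 < ‖A q‖ := norm_pos_iff.2 (Finsupp.mem_support_iff.1 hq)
  obtain ⟨f, hf, hfc, hfq, hf0⟩ := exists_contDiff_hasCompactSupport_eq_one_eq_zero A.support q
  have hfr : ContDiff ℝ r f := contDiff_infty.1 hf r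
  obtain ⟨C, hC⟩ := exists_bound_iteratedFDeriv_of_hasCompactSupport hfc hfr
  obtain ⟨φ, -, hφ⟩ := exists_dual_vector ℝ (A q) hAq.ne'
  have hM : 0 ≤ C * ‖φ‖ :=
    mul_nonneg ((norm_nonneg _).trans (hC 0 r.zero_le q)) (norm_nonneg φ)
  have hbound := abs_le_mul_Bnorm_of_isFormBound (isFormBound_formOf hfr hC φ) hM A
  rw [formOf_eq_of_eq_zero_off φ hf0, hfq, one_mul, hφ, RCLike.ofReal_real_eq_id, id,
    abs_norm] at hbound
  exact pos_of_mul_pos_right (hAq.trans_le hbound) hM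
end
end

section
/- If ω is an exterior k-form on ℝⁿ all of whose r-th order directional derivatives exist with |ω|_{C^r} < ∞, then |ω(Δ_{σ^r}(p;α))| ≤ ‖σ‖·‖α‖·|ω|_{C^r} for every r-difference k-chain Δ_{σ^r}(p;α) with α simple. -/
/-!
By induction on the number `r` of difference vectors. Writing `σ = u :: τ`, the difference
`Δ_σ f p = Δ_τ f (p + u) - Δ_τ f p` is bounded by the mean value theorem along the segment
from `p` to `p + u` by the supremum of the derivative of `Δ_τ f` in direction `u`. Differences
commute with derivatives, so that derivative is `Δ_τ (∂_u f)`, and `∂_u f` satisfies the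
`C^{r-1}` bound with constant `M ‖u‖`; the induction hypothesis applied to it finishes.
-/

noncomputable section

open Filter

variable {E : Type*} [NormedAddCommGroup E] [NormedSpace ℝ E]

/-- Iterated directional derivative of a function along a list of directions. -/
def dirDerivs : List E → (E → ℝ) → E → ℝ
  | [], f => f
  | u :: σ, f => fun p => fderiv ℝ (dirDerivs σ f) p u

/-- Iterated translation-difference of a function along a list of vectors. -/
def fdiff : List E → (E → ℝ) → E → ℝ
  | [], f => f
  | u :: σ, f => fun p => fdiff σ f (p + u) - fdiff σ f p

end

section

variable {E : Type*} [NormedAddCommGroup E]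

@[simp]
lemma lnorm_cons (u : E) (σ : List E) : lnorm (u :: σ) = ‖u‖ * lnorm σ := by
  simp [lnorm]

@[simp]
lemma lnorm_append_singleton (σ : List E) (u : E) :
    lnorm (σ ++ [u]) = lnorm σ * ‖u‖ := by
  simp [lnorm]

end

section

variable {E : Type*} [NormedAddCommGroup E] [NormedSpace ℝ E]

lemma dirDerivs_append_singleton (u : E) :
    ∀ (σ : List E) (f : E → ℝ),
      dirDerivs (σ ++ [u]) f = dirDerivs σ (fun q => fderiv ℝ f q u)
  | [], _ => rfl
  | v :: σ, f => by
    funext p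
    simp only [List.cons_append, dirDerivs, dirDerivs_append_singleton u σ f]

lemma Differentiable.fdiff {f : E → ℝ} (hf : Differentiable ℝ f) :
    ∀ σ : List E, Differentiable ℝ (fdiff σ f)
  | [] => hf
  | v :: σ => ((hf.fdiff σ).comp (differentiable_id.add_const v)).sub (hf.fdiff σ)

lemma fderiv_fdiff_apply {f : E → ℝ} (hf : Differentiable ℝ f) (u : E) :
    ∀ (σ : List E) (p : E),
      fderiv ℝ (fdiff σ f) p u = fdiff σ (fun q => fderiv ℝ f q u) p
  | [], _ => rfl
  | v :: σ, p => by
    have hg := hf.fdiff σ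
    change fderiv ℝ (fun q => fdiff σ f (q + v) - fdiff σ f q) p u = _
    rw [fderiv_fun_sub ((differentiableAt_comp_add_right v).2 (hg _)) (hg p),
      fderiv_comp_add_right, sub_apply,
      fderiv_fdiff_apply hf u σ (p + v), fderiv_fdiff_apply hf u σ p]
    rfl

lemma abs_sub_le_of_abs_fderiv_apply_le {g : E → ℝ} (hg : Differentiable ℝ g) {C : ℝ}
    (u : E) (hC : ∀ q, |fderiv ℝ g q u| ≤ C) (p : E) :
    |g (p + u) - g p| ≤ C := by
  have hline : ∀ t : ℝ, HasDerivAt (fun t : ℝ => g (p + t • u)) (fderiv ℝ g (p + t • u) u) t := by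
    intro t
    have hseg : HasDerivAt (fun t : ℝ => p + t • u) u t := by
      simpa using ((hasDerivAt_id t).smul_const u).const_add p
    exact (hg _).hasFDerivAt.comp_hasDerivAt t hseg
  simpa using norm_image_sub_le_of_norm_deriv_le_segment_01'
    (fun t _ => (hline t).hasDerivWithinAt) (fun t _ => hC (p + t • u))

theorem abs_fdiff_le_of_abs_dirDerivs_le {f : E → ℝ} {C : ℝ} (σ : List E)
    (hdiff : ∀ τ : List E, τ.length < σ.length → Differentiable ℝ (dirDerivs τ f))
    (hC : ∀ (τ : List E) (q : E), τ.length = σ.length → |dirDerivs τ f q| ≤ C * lnorm τ)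
    (p : E) : |fdiff σ f p| ≤ C * lnorm σ := by
  induction σ generalizing f C p with
  | nil => simpa [lnorm, fdiff, dirDerivs] using hC [] p rfl
  | cons u σ ih =>
    have hf : Differentiable ℝ f := hdiff [] (by simp)
    have hderiv : ∀ q, |fdiff σ (fun q => fderiv ℝ f q u) q| ≤ C * ‖u‖ * lnorm σ := by
      refine ih (fun τ hτ => ?_) (fun τ q hτ => ?_)
      · rw [← dirDerivs_append_singleton]
        exact hdiff _ (by simp [hτ])
      · rw [← dirDerivs_append_singleton]
        simpa [mul_assoc, mul_comm (lnorm τ)] using hC (τ ++ [u]) q (by simp [hτ])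
    calc |fdiff (u :: σ) f p| = |fdiff σ f (p + u) - fdiff σ f p| := rfl
      _ ≤ C * ‖u‖ * lnorm σ :=
        abs_sub_le_of_abs_fderiv_apply_le (hf.fdiff σ) u
          (fun q => fderiv_fdiff_apply hf u σ q ▸ hderiv q) p
      _ = C * lnorm (u :: σ) := by rw [lnorm_cons, mul_assoc]

end

theorem abs_fdiff_le_of_Cr_bound_general {n k : ℕ} (r : ℕ)
    [NormedAddCommGroup (⋀[ℝ]^k (EuclideanSpace ℝ (Fin n)))]
    [NormedSpace ℝ (⋀[ℝ]^k (EuclideanSpace ℝ (Fin n)))]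
    (ω : EuclideanSpace ℝ (Fin n) → (⋀[ℝ]^k (EuclideanSpace ℝ (Fin n))) →ₗ[ℝ] ℝ)
    (hdiff : ∀ (α : ⋀[ℝ]^k (EuclideanSpace ℝ (Fin n)))
      (σ : List (EuclideanSpace ℝ (Fin n))), σ.length < r →
      Differentiable ℝ (dirDerivs σ (fun q => ω q α)))
    (M : ℝ)
    (hM : ∀ (σ : List (EuclideanSpace ℝ (Fin n))) (p : EuclideanSpace ℝ (Fin n))
      (α : ⋀[ℝ]^k (EuclideanSpace ℝ (Fin n))), σ.length = r →
      |dirDerivs σ (fun q => ω q α) p| ≤ M * lnorm σ * ‖α‖)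
    (σ : List (EuclideanSpace ℝ (Fin n))) (hσ : σ.length = r)
    (p : EuclideanSpace ℝ (Fin n))
    (α : ⋀[ℝ]^k (EuclideanSpace ℝ (Fin n))) :
    |fdiff σ (fun q => ω q α) p| ≤ lnorm σ * ‖α‖ * M := by
  subst hσ
  have h := abs_fdiff_le_of_abs_dirDerivs_le σ (C := M * ‖α‖) (hdiff α)
    (fun τ q hτ => (hM τ q α hτ).trans_eq (by ring)) p
  exact h.trans_eq (by ring)

/-- If `ω` is an exterior `k`-form on `ℝⁿ` all of whose `r`-th order
directional derivatives exist and are bounded (i.e. `|ω|_{C^r} ≤ M < ∞`), then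
`|ω(Δ_{σ^r}(p;α))| ≤ ‖σ‖·‖α‖·|ω|_{C^r}` for every `r`-difference `k`-chain with `α`
a simple `k`-vector. -/
theorem abs_fdiff_le_of_Cr_bound {n k : ℕ} (r : ℕ)
    [NormedAddCommGroup (⋀[ℝ]^k (EuclideanSpace ℝ (Fin n)))]
    [NormedSpace ℝ (⋀[ℝ]^k (EuclideanSpace ℝ (Fin n)))]
    (ω : EuclideanSpace ℝ (Fin n) → (⋀[ℝ]^k (EuclideanSpace ℝ (Fin n))) →ₗ[ℝ] ℝ)
    (hdiff : ∀ (α : ⋀[ℝ]^k (EuclideanSpace ℝ (Fin n)))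
      (σ : List (EuclideanSpace ℝ (Fin n))), σ.length < r →
      Differentiable ℝ (dirDerivs σ (fun q => ω q α)))
    (M : ℝ)
    (hM : ∀ (σ : List (EuclideanSpace ℝ (Fin n))) (p : EuclideanSpace ℝ (Fin n))
      (α : ⋀[ℝ]^k (EuclideanSpace ℝ (Fin n))), σ.length = r →
      |dirDerivs σ (fun q => ω q α) p| ≤ M * lnorm σ * ‖α‖)
    (σ : List (EuclideanSpace ℝ (Fin n))) (hσ : σ.length = r)
    (p : EuclideanSpace ℝ (Fin n))
    (v : Fin k → EuclideanSpace ℝ (Fin n))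
    (α : ⋀[ℝ]^k (EuclideanSpace ℝ (Fin n)))
    (hα : (α : ExteriorAlgebra ℝ (EuclideanSpace ℝ (Fin n))) = ExteriorAlgebra.ιMulti ℝ k v) :
    |fdiff σ (fun q => ω q α) p| ≤ lnorm σ * ‖α‖ * M :=
  abs_fdiff_le_of_Cr_bound_general r ω hdiff M hM σ hσ p α
end

section
/- Cartesian wedge product of difference chains multiplies norms: if D is an i-difference k-chain in U₁ ⊆ ℝⁿ and E is a j-difference ℓ-chain in U₂ ⊆ ℝᵐ, then D × E is an (i+j)-difference (k+ℓ)-chain in U₁ × U₂ with ‖D × E‖_{B^{i+j}, U₁×U₂} ≤ |D|_{B^{i},U₁} · |E|_{B^{j},U₂}. Consequently, for Dirac chains P and Q, ‖P × Q‖_{B^{r+s}, U₁×U₂} ≤ ‖P‖_{B^r,U₁} · ‖Q‖_{B^s,U₂}. -/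
noncomputable section

open Finsupp Filter

variable {E W : Type*} [NormedAddCommGroup E] [NormedSpace ℝ E]
  [NormedAddCommGroup W] [NormedSpace ℝ W]

/-- The support points of the difference chain `Δ_σ(p;·)`. -/
def dpts : List E → E → Set E
  | [], p => {p}
  | u :: σ, p => dpts σ p ∪ dpts σ (p + u)

/-- A difference chain is *inside* `U` when the convex hull of its support points is
contained in `U`. -/
def Inside (U : Set E) (σ : List E) (p : E) : Prop :=
  convexHull ℝ (dpts σ p) ⊆ U

/-- Costs of representations of `A` by difference chains of order `≤ r` inside `U`. -/
def repsIn (U : Set E) (r : ℕ) (A : E →₀ W) : Set ℝ :=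
  {c | ∃ (m : ℕ) (σ : Fin m → List E) (p : Fin m → E) (α : Fin m → W),
      (∀ i, (σ i).length ≤ r) ∧ (∀ i, Inside U (σ i) (p i)) ∧
      A = ∑ i, diff (σ i) (Finsupp.single (p i) (α i)) ∧
      c = ∑ i, lnorm (σ i) * ‖α i‖}

/-- The `B^{r,U}` norm of a Dirac chain in the open set `U`. -/
def BnormIn (U : Set E) (r : ℕ) (A : E →₀ W) : ℝ := sInf (repsIn U r A)

/-- Cartesian wedge product of Dirac chains, relative to a wedge product `w` of the
coefficient spaces. -/
def cross {E₁ E₂ W₁ W₂ W₃ : Type*} [AddCommGroup W₁] [Module ℝ W₁]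
    [AddCommGroup W₂] [Module ℝ W₂] [AddCommGroup W₃] [Module ℝ W₃]
    (w : W₁ →ₗ[ℝ] W₂ →ₗ[ℝ] W₃) (A : E₁ →₀ W₁) (B : E₂ →₀ W₂) : (E₁ × E₂) →₀ W₃ :=
  A.sum fun p α => B.sum fun q β => Finsupp.single (p, q) (w α β)

/-! The difference chain `Δ_σ(p;α) × Δ_τ(q;β)` is again a single difference chain, namely
`Δ_{(σ,0),(0,τ)}((p,q); α∧β)`, whose support points form the product of the two supports, so
its convex hull is the product of the two convex hulls. Hence crossing two decompositions of
`P` and `Q` term by term gives a decomposition of `P × Q` inside `U₁ × U₂` whose cost is at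
most the product of the two costs; taking infima gives the norm inequality. -/

lemma le_mul_csInf {S : Set ℝ} {a X : ℝ} (ha : 0 ≤ a) (hS : S.Nonempty)
    (h : ∀ c ∈ S, X ≤ a * c) : X ≤ a * sInf S := by
  rw [← smul_eq_mul, ← Real.sInf_smul_of_nonneg ha]
  exact le_csInf hS.smul_set (by rintro _ ⟨c, hc, rfl⟩; exact h c hc)

lemma le_csInf_mul_csInf {S T : Set ℝ} {X : ℝ} (hS : S.Nonempty) (hT : T.Nonempty)
    (hS₀ : ∀ c ∈ S, 0 ≤ c) (hT₀ : ∀ d ∈ T, 0 ≤ d)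
    (h : ∀ c ∈ S, ∀ d ∈ T, X ≤ c * d) : X ≤ sInf S * sInf T := by
  refine le_mul_csInf (le_csInf hS hS₀) hT fun d hd => ?_
  rw [mul_comm]
  exact le_mul_csInf (hT₀ d hd) hS fun c hc => mul_comm c d ▸ h c hc d hd

section CrossBilinear

variable {E₁ E₂ W₁ W₂ W₃ : Type*} [AddCommGroup W₁] [Module ℝ W₁]
  [AddCommGroup W₂] [Module ℝ W₂] [AddCommGroup W₃] [Module ℝ W₃]
  (w : W₁ →ₗ[ℝ] W₂ →ₗ[ℝ] W₃)

lemma cross_single_left (p : E₁) (α : W₁) (B : E₂ →₀ W₂) :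
    cross w (single p α) B = B.sum fun q β => single (p, q) (w α β) :=
  sum_single_index (by simp)

lemma cross_single_right (A : E₁ →₀ W₁) (q : E₂) (β : W₂) :
    cross w A (single q β) = A.sum fun p α => single (p, q) (w α β) :=
  Finsupp.sum_congr fun _ _ => sum_single_index (by simp)

lemma cross_single_single (p : E₁) (α : W₁) (q : E₂) (β : W₂) :
    cross w (single p α) (single q β) = single (p, q) (w α β) := by
  rw [cross_single_left, sum_single_index (by simp)]

lemma cross_add_left (A A' : E₁ →₀ W₁) (B : E₂ →₀ W₂) :
    cross w (A + A') B = cross w A B + cross w A' B :=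
  sum_add_index' (by simp) fun _ _ _ => by
    simp only [map_add, LinearMap.add_apply, single_add, Finsupp.sum_add]

lemma cross_add_right (A : E₁ →₀ W₁) (B B' : E₂ →₀ W₂) :
    cross w A (B + B') = cross w A B + cross w A B' := by
  rw [cross, cross, cross, ← Finsupp.sum_add]
  exact Finsupp.sum_congr fun _ _ =>
    sum_add_index' (by simp) fun _ _ _ => by simp only [map_add, single_add]

def crossAddHomLeft (B : E₂ →₀ W₂) : (E₁ →₀ W₁) →+ (E₁ × E₂ →₀ W₃) :=
  AddMonoidHom.mk' (cross w · B) fun A A' => cross_add_left w A A' B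

def crossAddHomRight (A : E₁ →₀ W₁) : (E₂ →₀ W₂) →+ (E₁ × E₂ →₀ W₃) :=
  AddMonoidHom.mk' (cross w A ·) (cross_add_right w A)

lemma cross_sub_left (A A' : E₁ →₀ W₁) (B : E₂ →₀ W₂) :
    cross w (A - A') B = cross w A B - cross w A' B :=
  map_sub (crossAddHomLeft w B) A A'

lemma cross_sub_right (A : E₁ →₀ W₁) (B B' : E₂ →₀ W₂) :
    cross w A (B - B') = cross w A B - cross w A B' :=
  map_sub (crossAddHomRight w A) B B'

lemma cross_sum_sum {ι κ : Type*} [Fintype ι] [Fintype κ] (A : ι → E₁ →₀ W₁)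
    (B : κ → E₂ →₀ W₂) :
    cross w (∑ i, A i) (∑ j, B j) = ∑ ij : ι × κ, cross w (A ij.1) (B ij.2) := by
  calc cross w (∑ i, A i) (∑ j, B j) = ∑ i, cross w (A i) (∑ j, B j) :=
        map_sum (crossAddHomLeft w _) A _
    _ = ∑ i, ∑ j, cross w (A i) (B j) :=
        Finset.sum_congr rfl fun i _ => map_sum (crossAddHomRight w (A i)) B _
    _ = ∑ ij : ι × κ, cross w (A ij.1) (B ij.2) := by rw [Fintype.sum_prod_type]

end CrossBilinear

section DifferenceChains

variable {F V : Type*} [NormedAddCommGroup F] [NormedAddCommGroup V]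

lemma transl_single (u p : F) (α : V) : transl u (single p α) = single (p + u) α :=
  mapDomain_single

lemma transl_add (u : F) (A A' : F →₀ V) : transl u (A + A') = transl u A + transl u A' :=
  mapDomain_add

lemma transl_sum {ι M : Type*} [Zero M] (u : F) (B : ι →₀ M) (g : ι → M → F →₀ V) :
    transl u (B.sum g) = B.sum fun i b => transl u (g i b) :=
  map_finsuppSum (mapDomain.addMonoidHom (· + u)) B g

lemma diff_append (σ τ : List F) (A : F →₀ V) : diff (σ ++ τ) A = diff σ (diff τ A) := by
  induction σ with
  | nil => rfl
  | cons u σ ih => exact congrArg (del u) ih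

variable {E₁ E₂ W₁ W₂ W₃ : Type*} [NormedAddCommGroup E₁] [NormedAddCommGroup E₂]
  [NormedAddCommGroup W₁] [NormedSpace ℝ W₁] [NormedAddCommGroup W₂] [NormedSpace ℝ W₂]
  [NormedAddCommGroup W₃] [NormedSpace ℝ W₃]
  (w : W₁ →ₗ[ℝ] W₂ →ₗ[ℝ] W₃)

lemma cross_transl_left (u : E₁) (A : E₁ →₀ W₁) (B : E₂ →₀ W₂) :
    cross w (transl u A) B = transl (u, (0 : E₂)) (cross w A B) := by
  induction A using Finsupp.induction_linear with
  | zero => simp [transl, cross]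
  | add A A' hA hA' => rw [transl_add, cross_add_left, hA, hA', cross_add_left, transl_add]
  | single p α =>
    rw [transl_single, cross_single_left, cross_single_left, transl_sum]
    exact Finsupp.sum_congr fun q _ => by rw [transl_single, Prod.mk_add_mk, add_zero]

lemma cross_transl_right (v : E₂) (A : E₁ →₀ W₁) (B : E₂ →₀ W₂) :
    cross w A (transl v B) = transl ((0 : E₁), v) (cross w A B) := by
  induction B using Finsupp.induction_linear with
  | zero => simp [transl, cross]
  | add B B' hB hB' => rw [transl_add, cross_add_right, hB, hB', cross_add_right, transl_add]
  | single q β =>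
    rw [transl_single, cross_single_right, cross_single_right, transl_sum]
    exact Finsupp.sum_congr fun p _ => by rw [transl_single, Prod.mk_add_mk, add_zero]

lemma cross_diff_left (σ : List E₁) (A : E₁ →₀ W₁) (B : E₂ →₀ W₂) :
    cross w (diff σ A) B = diff (σ.map fun u => (u, (0 : E₂))) (cross w A B) := by
  induction σ with
  | nil => rfl
  | cons u σ ih => simp only [diff, del, List.map_cons, cross_sub_left, cross_transl_left, ih]

lemma cross_diff_right (τ : List E₂) (A : E₁ →₀ W₁) (B : E₂ →₀ W₂) :
    cross w A (diff τ B) = diff (τ.map fun v => ((0 : E₁), v)) (cross w A B) := by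
  induction τ with
  | nil => rfl
  | cons v τ ih => simp only [diff, del, List.map_cons, cross_sub_right, cross_transl_right, ih]

/-- The paper's `Δ_{σ,τ}` is `diff (crossList σ τ)`. -/
def crossList (σ : List E₁) (τ : List E₂) : List (E₁ × E₂) :=
  σ.map (fun u => (u, 0)) ++ τ.map (fun v => (0, v))

lemma length_crossList (σ : List E₁) (τ : List E₂) :
    (crossList σ τ).length = σ.length + τ.length := by
  simp [crossList]

lemma cross_diff_single_diff_single (σ : List E₁) (p : E₁) (α : W₁) (τ : List E₂) (q : E₂)
    (β : W₂) :
    cross w (diff σ (single p α)) (diff τ (single q β)) =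
      diff (crossList σ τ) (single (p, q) (w α β)) := by
  rw [cross_diff_left, cross_diff_right, cross_single_single, crossList, diff_append]

lemma dpts_map_inr (τ : List E₂) (p : E₁) (q : E₂) :
    dpts (τ.map fun v => ((0 : E₁), v)) (p, q) = {p} ×ˢ dpts τ q := by
  induction τ generalizing q with
  | nil => simp [dpts]
  | cons v τ ih => simp only [List.map_cons, dpts, ih, Prod.mk_add_mk, add_zero, Set.prod_union]

lemma dpts_crossList (σ : List E₁) (τ : List E₂) (p : E₁) (q : E₂) :
    dpts (crossList σ τ) (p, q) = dpts σ p ×ˢ dpts τ q := by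
  induction σ generalizing p with
  | nil => exact dpts_map_inr τ p q
  | cons u σ ih =>
    simp only [crossList, List.map_cons, List.cons_append, dpts, Prod.mk_add_mk, add_zero] at ih ⊢
    rw [ih p, ih (p + u), Set.union_prod]

lemma Inside.crossList [NormedSpace ℝ E₁] [NormedSpace ℝ E₂] {U₁ : Set E₁} {U₂ : Set E₂}
    {σ : List E₁} {τ : List E₂} {p : E₁} {q : E₂} (h₁ : Inside U₁ σ p) (h₂ : Inside U₂ τ q) :
    Inside (U₁ ×ˢ U₂) (crossList σ τ) (p, q) := by
  rw [Inside, dpts_crossList, convexHull_prod]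
  exact Set.prod_mono h₁ h₂

end DifferenceChains

section Lnorm

variable {F G : Type*} [NormedAddCommGroup F] [NormedAddCommGroup G]

lemma lnorm_nonneg (σ : List F) : 0 ≤ lnorm σ :=
  List.prod_nonneg (by simp)

lemma lnorm_append (σ τ : List F) : lnorm (σ ++ τ) = lnorm σ * lnorm τ := by
  simp [lnorm]

lemma lnorm_map {f : F → G} (hf : ∀ u, ‖f u‖ = ‖u‖) (σ : List F) :
    lnorm (σ.map f) = lnorm σ := by
  simp only [lnorm, List.map_map]
  exact congrArg List.prod (List.map_congr_left fun u _ => hf u)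

lemma lnorm_crossList (σ : List F) (τ : List G) :
    lnorm (crossList σ τ) = lnorm σ * lnorm τ := by
  rw [crossList, lnorm_append, lnorm_map (by simp [Prod.norm_def]),
    lnorm_map (by simp [Prod.norm_def])]

end Lnorm

section BnormIn

variable {F V : Type*} [NormedAddCommGroup F] [NormedSpace ℝ F] [NormedAddCommGroup V]

lemma repsIn_nonneg {U : Set F} {r : ℕ} {A : F →₀ V} {c : ℝ} (hc : c ∈ repsIn U r A) :
    0 ≤ c := by
  obtain ⟨m, σ, p, α, -, -, -, rfl⟩ := hc
  exact Finset.sum_nonneg fun i _ => mul_nonneg (lnorm_nonneg _) (norm_nonneg _)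

lemma BnormIn_le {U : Set F} {r : ℕ} {A : F →₀ V} {c : ℝ} (hc : c ∈ repsIn U r A) :
    BnormIn U r A ≤ c :=
  csInf_le ⟨0, fun _ => repsIn_nonneg⟩ hc

lemma mem_repsIn_of_fintype {ι : Type*} [Fintype ι] {U : Set F} {r : ℕ} {A : F →₀ V}
    (σ : ι → List F) (p : ι → F) (α : ι → V) (hlen : ∀ i, (σ i).length ≤ r)
    (hin : ∀ i, Inside U (σ i) (p i)) (hA : A = ∑ i, diff (σ i) (single (p i) (α i))) :
    ∑ i, lnorm (σ i) * ‖α i‖ ∈ repsIn U r A := by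
  let e := (Fintype.equivFin ι).symm
  refine ⟨_, σ ∘ e, p ∘ e, α ∘ e, fun i => hlen _, fun i => hin _, ?_, ?_⟩
  · rw [hA]
    exact (e.sum_comp fun i => diff (σ i) (single (p i) (α i))).symm
  · exact (e.sum_comp fun i => lnorm (σ i) * ‖α i‖).symm

lemma mem_repsIn_diff_single {U : Set F} {r : ℕ} {σ : List F} {p : F} (α : V)
    (hlen : σ.length ≤ r) (hin : Inside U σ p) :
    lnorm σ * ‖α‖ ∈ repsIn U r (diff σ (single p α)) := by
  simpa using mem_repsIn_of_fintype (ι := Unit) (fun _ => σ) (fun _ => p) (fun _ => α)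
    (fun _ => hlen) (fun _ => hin) (by simp)

lemma repsIn_nonempty {U : Set F} (r : ℕ) {P : F →₀ V} (hP : ∀ p ∈ P.support, p ∈ U) :
    (repsIn U r P).Nonempty :=
  ⟨_, mem_repsIn_of_fintype (ι := P.support) (fun _ => []) Subtype.val (fun p => P p)
    (fun _ => Nat.zero_le r)
    (fun p => by simpa [Inside, dpts] using hP p p.2)
    (by
      simp only [diff]
      rw [Finset.sum_coe_sort P.support fun p => single p (P p)]
      exact (sum_single P).symm)⟩

variable {E₁ E₂ W₁ W₂ W₃ : Type*}
  [NormedAddCommGroup E₁] [NormedSpace ℝ E₁] [NormedAddCommGroup E₂] [NormedSpace ℝ E₂]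
  [NormedAddCommGroup W₁] [NormedSpace ℝ W₁] [NormedAddCommGroup W₂] [NormedSpace ℝ W₂]
  [NormedAddCommGroup W₃] [NormedSpace ℝ W₃]
  {w : W₁ →ₗ[ℝ] W₂ →ₗ[ℝ] W₃}

lemma BnormIn_cross_le_mul (hw : ∀ α β, ‖w α β‖ ≤ ‖α‖ * ‖β‖) {U₁ : Set E₁} {U₂ : Set E₂}
    {r s : ℕ} {P : E₁ →₀ W₁} {Q : E₂ →₀ W₂} {c d : ℝ} (hc : c ∈ repsIn U₁ r P)
    (hd : d ∈ repsIn U₂ s Q) :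
    BnormIn (U₁ ×ˢ U₂) (r + s) (cross w P Q) ≤ c * d := by
  obtain ⟨k, σ, p, α, hσ, hσU, hP, rfl⟩ := hc
  obtain ⟨l, τ, q, β, hτ, hτU, hQ, rfl⟩ := hd
  have hmem := mem_repsIn_of_fintype (ι := Fin k × Fin l) (U := U₁ ×ˢ U₂) (r := r + s)
    (A := cross w P Q)
    (fun ij => crossList (σ ij.1) (τ ij.2)) (fun ij => (p ij.1, q ij.2))
    (fun ij => w (α ij.1) (β ij.2))
    (fun ij => (length_crossList _ _).trans_le (add_le_add (hσ _) (hτ _)))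
    (fun ij => (hσU ij.1).crossList (hτU ij.2))
    (by
      rw [hP, hQ, cross_sum_sum]
      exact Finset.sum_congr rfl fun ij _ => cross_diff_single_diff_single w _ _ _ _ _ _)
  refine (BnormIn_le hmem).trans ?_
  rw [Finset.sum_mul_sum, ← Finset.sum_product', Finset.univ_product_univ]
  refine Finset.sum_le_sum fun ij _ => ?_
  calc lnorm (crossList (σ ij.1) (τ ij.2)) * ‖w (α ij.1) (β ij.2)‖
      ≤ lnorm (σ ij.1) * lnorm (τ ij.2) * (‖α ij.1‖ * ‖β ij.2‖) := by
        rw [lnorm_crossList]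
        exact mul_le_mul_of_nonneg_left (hw _ _)
          (mul_nonneg (lnorm_nonneg _) (lnorm_nonneg _))
    _ = lnorm (σ ij.1) * ‖α ij.1‖ * (lnorm (τ ij.2) * ‖β ij.2‖) := by ring

lemma BnormIn_cross_le (hw : ∀ α β, ‖w α β‖ ≤ ‖α‖ * ‖β‖) {U₁ : Set E₁} {U₂ : Set E₂}
    (r s : ℕ) {P : E₁ →₀ W₁} {Q : E₂ →₀ W₂} (hP : ∀ p ∈ P.support, p ∈ U₁)
    (hQ : ∀ q ∈ Q.support, q ∈ U₂) :
    BnormIn (U₁ ×ˢ U₂) (r + s) (cross w P Q) ≤ BnormIn U₁ r P * BnormIn U₂ s Q :=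
  le_csInf_mul_csInf (repsIn_nonempty r hP) (repsIn_nonempty s hQ)
    (fun _ => repsIn_nonneg) (fun _ => repsIn_nonneg)
    fun _ hc _ hd => BnormIn_cross_le_mul hw hc hd

end BnormIn

/-- Cartesian wedge product of difference chains multiplies norms: an
`i`-difference `k`-chain `D` in `U₁ ⊆ ℝⁿ` crossed with a `j`-difference `ℓ`-chain `E` in
`U₂ ⊆ ℝᵐ` is an `(i+j)`-difference `(k+ℓ)`-chain in `U₁ × U₂` with
`‖D × E‖_{B^{i+j},U₁×U₂} ≤ |D|_{B^i,U₁}·|E|_{B^j,U₂}`; consequently for Dirac chains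
`P` in `U₁` and `Q` in `U₂`, `‖P × Q‖_{B^{r+s},U₁×U₂} ≤ ‖P‖_{B^r,U₁}·‖Q‖_{B^s,U₂}`. -/
theorem cross_Bnorm_le {n m : ℕ} {W₁ W₂ W₃ : Type*}
    [NormedAddCommGroup W₁] [NormedSpace ℝ W₁]
    [NormedAddCommGroup W₂] [NormedSpace ℝ W₂]
    [NormedAddCommGroup W₃] [NormedSpace ℝ W₃]
    (w : W₁ →ₗ[ℝ] W₂ →ₗ[ℝ] W₃) (hw : ∀ α β, ‖w α β‖ ≤ ‖α‖ * ‖β‖)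
    (U₁ : Set (EuclideanSpace ℝ (Fin n))) (U₂ : Set (EuclideanSpace ℝ (Fin m))) :
    (∀ (σ : List (EuclideanSpace ℝ (Fin n))) (p : EuclideanSpace ℝ (Fin n)) (α : W₁)
       (τ : List (EuclideanSpace ℝ (Fin m))) (q : EuclideanSpace ℝ (Fin m)) (β : W₂),
       Inside U₁ σ p → Inside U₂ τ q →
       (∃ ρ : List (EuclideanSpace ℝ (Fin n) × EuclideanSpace ℝ (Fin m)),
          ρ.length = σ.length + τ.length ∧ Inside (U₁ ×ˢ U₂) ρ (p, q) ∧
          cross w (diff σ (Finsupp.single p α)) (diff τ (Finsupp.single q β)) =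
            diff ρ (Finsupp.single (p, q) (w α β))) ∧
       BnormIn (U₁ ×ˢ U₂) (σ.length + τ.length)
           (cross w (diff σ (Finsupp.single p α)) (diff τ (Finsupp.single q β))) ≤
         (lnorm σ * ‖α‖) * (lnorm τ * ‖β‖)) ∧
    (∀ (r s : ℕ) (P : (EuclideanSpace ℝ (Fin n)) →₀ W₁)
       (Q : (EuclideanSpace ℝ (Fin m)) →₀ W₂),
       (∀ p ∈ P.support, p ∈ U₁) → (∀ q ∈ Q.support, q ∈ U₂) →
       BnormIn (U₁ ×ˢ U₂) (r + s) (cross w P Q) ≤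
         BnormIn U₁ r P * BnormIn U₂ s Q) := by
  refine ⟨fun σ p α τ q β h₁ h₂ => ⟨?_, ?_⟩, fun r s P Q hP hQ => BnormIn_cross_le hw r s hP hQ⟩
  · exact ⟨crossList σ τ, length_crossList σ τ, h₁.crossList h₂,
      cross_diff_single_diff_single w σ p α τ q β⟩
  · exact BnormIn_cross_le_mul hw (mem_repsIn_diff_single α le_rfl h₁)
      (mem_repsIn_diff_single β le_rfl h₂)
end
end
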